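/- Let p ≥ 2 and define T(a) = |a|^{p-2} a for real a. Then there exists a constant C depending only on p such that for all real a, b: |T(a+b) − T(a)| ≤ C · |b| · (|a|^{p-2} + |b|^{p-2}). -/

import Mathlib

/-!
`T y = |y| ^ (p - 2) * y` is differentiable with `T' y = (p - 1) * |y| ^ (p - 2)`, also at `0`
where its slope is `|y| ^ (p - 2)`. By the mean value theorem on the segment from `a` to `a + b`,
`|T (a + b) - T a| ≤ (p - 1) * (|a| + |b|) ^ (p - 2) * |b|`, and
`(|a| + |b|) ^ (p - 2) ≤ 2 ^ (p - 2) * (|a| ^ (p - 2) + |b| ^ (p - 2))`.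
-/

open Real Set Filter Topology

lemma hasDerivAt_abs_rpow_mul_self_of_ne_zero (r : ℝ) {x : ℝ} (hx : x ≠ 0) :
    HasDerivAt (fun y : ℝ => |y| ^ r * y) ((r + 1) * |x| ^ r) x := by
  have hsign : (SignType.sign x : ℝ) * x = |x| := by
    rcases hx.lt_or_gt with h | h <;> simp [h, abs_of_neg, abs_of_pos]
  have hpow : |x| ^ (r - 1) * |x| = |x| ^ r := by
    rw [← rpow_add_one (abs_ne_zero.mpr hx)]; ring_nf
  refine (((hasDerivAt_abs hx).rpow_const (p := r) (Or.inl (abs_ne_zero.mpr hx))).mul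
    (hasDerivAt_id x)).congr_deriv ?_
  calc _ = r * |x| ^ (r - 1) * (SignType.sign x * x) + |x| ^ r := by simp only [id]; ring
    _ = _ := by rw [hsign, mul_assoc, hpow]; ring

lemma hasDerivAt_abs_rpow_mul_self_zero {r : ℝ} (hr : 0 ≤ r) :
    HasDerivAt (fun y : ℝ => |y| ^ r * y) ((r + 1) * |0| ^ r) 0 := by
  have hslope : Tendsto (fun y : ℝ => |y| ^ r) (𝓝[≠] 0) (𝓝 ((r + 1) * |0| ^ r)) := by
    rcases hr.eq_or_lt with rfl | hr
    · simp
    · have := ((continuous_rpow_const hr.le).comp continuous_abs).tendsto 0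
      simpa [Function.comp_def, zero_rpow hr.ne'] using this.mono_left nhdsWithin_le_nhds
  rw [hasDerivAt_iff_tendsto_slope]
  refine hslope.congr' (eventually_nhdsWithin_of_forall fun y (hy : y ≠ 0) => ?_)
  simp [slope_def_field, hy]

lemma hasDerivAt_abs_rpow_mul_self {r : ℝ} (hr : 0 ≤ r) (x : ℝ) :
    HasDerivAt (fun y : ℝ => |y| ^ r * y) ((r + 1) * |x| ^ r) x := by
  rcases eq_or_ne x 0 with rfl | hx
  · exact hasDerivAt_abs_rpow_mul_self_zero hr
  · exact hasDerivAt_abs_rpow_mul_self_of_ne_zero r hx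

lemma abs_le_max_abs_abs_of_mem_uIcc {a b x : ℝ} (hx : x ∈ uIcc a b) : |x| ≤ max |a| |b| := by
  rcases mem_uIcc.mp hx with ⟨hax, hxb⟩ | ⟨hbx, hxa⟩
  · exact abs_le_max_abs_abs hax hxb
  · exact (abs_le_max_abs_abs hbx hxa).trans_eq (max_comm _ _)

lemma abs_abs_rpow_mul_self_sub_le {r : ℝ} (hr : 0 ≤ r) (a b : ℝ) :
    |(|b| ^ r * b) - (|a| ^ r * a)| ≤ (r + 1) * max |a| |b| ^ r * |b - a| := by
  have hderiv_le : ∀ x ∈ uIcc a b, ‖(r + 1) * |x| ^ r‖ ≤ (r + 1) * max |a| |b| ^ r := by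
    intro x hx
    rw [Real.norm_eq_abs, abs_of_nonneg (by positivity)]
    gcongr
    exact abs_le_max_abs_abs_of_mem_uIcc hx
  simpa only [Real.norm_eq_abs] using (convex_uIcc a b).norm_image_sub_le_of_norm_hasDerivWithin_le
    (fun x _ => (hasDerivAt_abs_rpow_mul_self hr x).hasDerivWithinAt) hderiv_le
    left_mem_uIcc right_mem_uIcc

lemma rpow_max_le_add_rpow {r x y : ℝ} (hx : 0 ≤ x) (hy : 0 ≤ y) :
    max x y ^ r ≤ x ^ r + y ^ r := by
  rcases le_total x y with h | h
  · rw [max_eq_right h]; linarith [rpow_nonneg hx r]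
  · rw [max_eq_left h]; linarith [rpow_nonneg hy r]

lemma rpow_add_le_two_rpow_mul_add_rpow {r x y : ℝ} (hr : 0 ≤ r) (hx : 0 ≤ x) (hy : 0 ≤ y) :
    (x + y) ^ r ≤ 2 ^ r * (x ^ r + y ^ r) := by
  calc (x + y) ^ r ≤ (2 * max x y) ^ r := by
        gcongr; rw [two_mul]; exact add_le_add (le_max_left x y) (le_max_right x y)
    _ = 2 ^ r * max x y ^ r := mul_rpow zero_le_two (le_max_of_le_left hx)
    _ ≤ 2 ^ r * (x ^ r + y ^ r) := by gcongr; exact rpow_max_le_add_rpow hx hy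

/-- Nonlinear commutator-type pointwise estimate for `T a = |a|^(p-2) * a`, `p ≥ 2`. -/
theorem stmt_0 (p : ℝ) (hp : 2 ≤ p) :
    ∃ C > 0, ∀ a b : ℝ,
      |(|a + b| ^ (p - 2) * (a + b)) - (|a| ^ (p - 2) * a)|
        ≤ C * |b| * (|a| ^ (p - 2) + |b| ^ (p - 2)) := by
  have hr : 0 ≤ p - 2 := sub_nonneg.mpr hp
  have hp1 : 0 < p - 1 := by linarith
  refine ⟨(p - 1) * 2 ^ (p - 2), mul_pos hp1 (rpow_pos_of_pos two_pos _), fun a b => ?_⟩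
  have hmax : max |a| |a + b| ≤ |a| + |b| :=
    max_le (le_add_of_nonneg_right (abs_nonneg b)) (abs_add_le a b)
  calc _ ≤ (p - 2 + 1) * max |a| |a + b| ^ (p - 2) * |a + b - a| :=
        abs_abs_rpow_mul_self_sub_le hr a (a + b)
    _ ≤ (p - 1) * (|a| + |b|) ^ (p - 2) * |b| := by
        rw [add_sub_cancel_left, show p - 2 + 1 = p - 1 by ring]
        gcongr
    _ ≤ (p - 1) * (2 ^ (p - 2) * (|a| ^ (p - 2) + |b| ^ (p - 2))) * |b| := by
        gcongr
        exact rpow_add_le_two_rpow_mul_add_rpow hr (abs_nonneg a) (abs_nonneg b)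
    _ = _ := by ring
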